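/- Every member of a history is a level. -/

import Mathlib

/-!
A member `x` of a history `h` equals `pot (x ∩ h)`, so it suffices that `x ∩ h` is again a
history. By `∈`-induction every member of a history is transitive (`pot` of a set of transitive
sets is transitive), hence `y ⊆ x` for `y ∈ x` and `y ∩ (x ∩ h) = y ∩ h`.
-/

def pot (a : ZFSet) : ZFSet :=
  ZFSet.sep (fun x => ∃ c ∈ a, x ⊆ c) (ZFSet.powerset (ZFSet.sUnion a))

def Potent (a : ZFSet) : Prop := ∀ x, (∃ c, x ⊆ c ∧ c ∈ a) → x ∈ a

def IsHistory (h : ZFSet) : Prop := ∀ x ∈ h, x = pot (x ∩ h)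

def IsLevel (s : ZFSet) : Prop := ∃ h, IsHistory h ∧ s = pot h

open ZFSet

theorem mem_pot {x a : ZFSet} : x ∈ pot a ↔ ∃ c ∈ a, x ⊆ c := by
  rw [pot, mem_sep, mem_powerset, and_iff_right_iff_imp]
  rintro ⟨c, hc, hxc⟩ z hz
  exact mem_sUnion.2 ⟨c, hc, hxc hz⟩

theorem isTransitive_pot {a : ZFSet} (ha : ∀ c ∈ a, c.IsTransitive) : (pot a).IsTransitive := by
  intro v hv u hu
  obtain ⟨c, hc, hvc⟩ := mem_pot.1 hv
  exact mem_pot.2 ⟨c, hc, (ha c hc).subset_of_mem (hvc hu)⟩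

theorem IsHistory.isTransitive_of_mem {h x : ZFSet} (hh : IsHistory h) (hx : x ∈ h) :
    x.IsTransitive := by
  induction x using ZFSet.inductionOn with
  | _ x ih =>
    rw [hh x hx]
    exact isTransitive_pot fun c hc => ih c (mem_inter.1 hc).1 (mem_inter.1 hc).2

theorem IsHistory.inter_of_mem {h x : ZFSet} (hh : IsHistory h) (hx : x ∈ h) :
    IsHistory (x ∩ h) := by
  intro y hy
  obtain ⟨hyx, hyh⟩ := mem_inter.1 hy
  have hy_sub : y ⊆ x := (hh.isTransitive_of_mem hx).subset_of_mem hyx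
  have hinter : y ∩ (x ∩ h) = y ∩ h := by
    ext z
    simp only [mem_inter]
    have := @hy_sub z
    tauto
  rw [hinter]
  exact hh y hyh

theorem stmt4 (h : ZFSet) (hh : IsHistory h) : ∀ x ∈ h, IsLevel x :=
  fun x hx => ⟨x ∩ h, hh.inter_of_mem hx, hh x hx⟩
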